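/- arXiv:1511.02090 — 3 statements merged into one kernel-verified Lean document; each statement's English description precedes it below -/
import Mathlib

section
/- Let U be a nonempty closed subset of ℝᵈ and f : ℝⁿ × U → ℝⁿ a mapping satisfying: (a) f is continuous on ℝⁿ × U; (b) f(0, u) = 0 for all u ∈ U; (c) for all u ∈ U and all x ∈ ℝⁿ, the partial Fréchet differential D₁f(x, u) exists and D₁f(·, u) is continuous from ℝⁿ into L(ℝⁿ, ℝⁿ); (d) D₁f maps nonempty bounded subsets of ℝⁿ × U into bounded subsets of L(ℝⁿ, ℝⁿ); (e) lim_{x → 0} ( sup_{u ∈ B} ‖D₁f(x, u)‖ ) = 0 for every nonempty bounded subset B ⊂ U. Then the operator 𝒯(x, u) := (x_{t+1} − f(x_t, u_t))_{t∈ℕ} satisfies: (α) 𝒯 is continuous from c₀(ℕ, ℝⁿ) × ℓ∞(ℕ, U) into c₀(ℕ, ℝⁿ); (β) for every (x, u) ∈ c₀(ℕ, ℝⁿ) × ℓ∞(ℕ, U) the partial Fréchet differential D₁𝒯(x, u) exists, and for each fixed u ∈ ℓ∞(ℕ, U) the map x ↦ D₁𝒯(x, u) is continuous from c₀(ℕ,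 ℝⁿ) into L(c₀(ℕ, ℝⁿ), c₀(ℕ, ℝⁿ)). -/
open Filter Topology Bornology Set ZeroAtInfty
open scoped ENNReal

noncomputable section

instance : Fact ((1 : ℝ≥0∞) ≤ ⊤) := ⟨le_top⟩

/-!
`𝒯(x, u) = shift x - N(x, u)` with the Nemytskii operator `N(x, u)_t = f (x_t, u_t)`.
For `x` null and `u` bounded with values in the closed set `U`, the pairs `(x_t, u_t)` lie in a
compact subset of `ℝⁿ × U`, near which `f` is uniformly continuous: hence `N(x, u)` is null
and `N` is continuous. For fixed `u`, the derivatives `D₁f(·, u_t)` are equicontinuous along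
`x`: for the finitely many `t` with `x_t` not small by continuity of each of them, for the
others because (e) makes them all small. The mean value theorem in each coordinate then shows
that the diagonal operator `(h_t) ↦ (D₁f(x_t, u_t) h_t)` is `D₁N(x, u)`, and the same
equicontinuity makes it depend continuously on `x`.
-/

open Metric

theorem IsCompact.exists_forall_dist_lt_of_continuousOn {X Y : Type*} [PseudoMetricSpace X]
    [PseudoMetricSpace Y] {f : X → Y} {s K : Set X} (hK : IsCompact K) (hKs : K ⊆ s)
    (hf : ContinuousOn f s) {ε : ℝ} (hε : 0 < ε) :
    ∃ δ > 0, ∀ k ∈ K, ∀ y ∈ s, dist y k < δ → dist (f y) (f k) < ε := by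
  have hloc (k : K) : ∃ r > 0, ∀ y ∈ s, dist y k < r → dist (f y) (f k) < ε / 2 :=
    Metric.continuousWithinAt_iff.1 (hf k (hKs k.2)) _ (half_pos hε)
  choose r hr hfr using hloc
  obtain ⟨δ, hδ, hball⟩ := lebesgue_number_lemma_of_metric hK (c := fun k : K => ball (k : X) (r k))
    (fun _ => isOpen_ball) fun k hk => mem_iUnion.2 ⟨⟨k, hk⟩, mem_ball_self (hr _)⟩
  refine ⟨δ, hδ, fun k hk y hys hy => ?_⟩
  obtain ⟨i, hi⟩ := hball k hk
  calc dist (f y) (f k) ≤ dist (f y) (f i) + dist (f k) (f i) := dist_triangle_right _ _ _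
    _ < ε / 2 + ε / 2 :=
      add_lt_add (hfr i y hys (hi hy)) (hfr i k (hKs hk) (hi (mem_ball_self hδ)))
    _ = ε := add_halves ε

namespace lp

theorem dist_coe_le_dist {ι : Type*} {E : ι → Type*} [∀ i, NormedAddCommGroup (E i)]
    {p : ℝ≥0∞} [Fact (1 ≤ p)] (hp : p ≠ 0) (u v : lp E p) (i : ι) :
    dist (u i) (v i) ≤ dist u v := by
  simpa only [dist_eq_norm, coeFn_sub, Pi.sub_apply] using norm_apply_le_norm hp (u - v) i

theorem isBounded_range {ι P : Type*} [NormedAddCommGroup P] (u : lp (fun _ : ι => P) ⊤) :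
    IsBounded (range u) :=
  isBounded_iff_forall_norm_le.2
    ⟨‖u‖, by rintro _ ⟨i, rfl⟩; exact norm_apply_le_norm ENNReal.top_ne_zero u i⟩

end lp

section NullSequences

variable {E G : Type*} [NormedAddCommGroup E] [NormedAddCommGroup G]

theorem exists_forall_norm_le_of_tendstoUniformly {φ : ℕ → E → G}
    (hφ : TendstoUniformly (fun z t => φ t z) 0 (𝓝 0)) {x : ℕ → E}
    (hx : Tendsto x atTop (𝓝 0)) : ∃ C, ∀ t, ‖φ t (x t)‖ ≤ C := by
  have hφx : Tendsto (fun t => φ t (x t)) atTop (𝓝 0) :=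
    Metric.tendsto_nhds.2 fun ε hε =>
      (hx.eventually (Metric.tendstoUniformly_iff.1 hφ ε hε)).mono fun t ht => by
        simpa [dist_comm] using ht t
  obtain ⟨C, hC⟩ := hφx.norm.bddAbove_range
  exact ⟨C, fun t => hC ⟨t, rfl⟩⟩

theorem equicontinuousAt_add_of_tendstoUniformly {φ : ℕ → E → G} (hφc : ∀ t, Continuous (φ t))
    (hφ : TendstoUniformly (fun z t => φ t z) 0 (𝓝 0)) {x : ℕ → E}
    (hx : Tendsto x atTop (𝓝 0)) : EquicontinuousAt (fun t z => φ t (x t + z)) 0 := by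
  refine Metric.equicontinuousAt_iff_right.2 fun ε hε => ?_
  obtain ⟨δ, hδ, hsmall⟩ :=
    Metric.eventually_nhds_iff.1 (Metric.tendstoUniformly_iff.1 hφ (ε / 2) (half_pos hε))
  simp only [Pi.zero_apply, dist_zero_left, dist_zero_right] at hsmall
  obtain ⟨T, hT⟩ := eventually_atTop.1 (hx.eventually (ball_mem_nhds 0 (half_pos hδ)))
  have head : ∀ᶠ z in 𝓝 0, ∀ t ∈ Iio T, dist (φ t (x t + 0)) (φ t (x t + z)) < ε :=
    (eventually_all_finite (finite_Iio T)).2 fun t _ =>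
      (Metric.tendsto_nhds.1 (((hφc t).tendsto _).comp
        ((continuous_const_add (x t)).tendsto' 0 _ (add_zero _))) ε hε).mono
          fun z hz => by simpa [dist_comm] using hz
  filter_upwards [head, ball_mem_nhds 0 (half_pos hδ)] with z hhead hz t
  rcases lt_or_ge t T with ht | ht
  · exact hhead t ht
  · have hxt : ‖x t‖ < δ / 2 := mem_ball_zero_iff.1 (hT t ht)
    rw [mem_ball_zero_iff] at hz
    rw [add_zero]
    calc dist (φ t (x t)) (φ t (x t + z)) ≤ ‖φ t (x t)‖ + ‖φ t (x t + z)‖ :=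
          dist_le_norm_add_norm _ _
      _ < ε / 2 + ε / 2 := add_lt_add (hsmall (hxt.trans (half_lt_self hδ)) t)
          (hsmall ((norm_add_le _ _).trans_lt (add_halves δ ▸ add_lt_add hxt hz)) t)
      _ = ε := add_halves ε

end NullSequences

namespace ZeroAtInftyContinuousMap

section Bounds

variable {α β : Type*} [TopologicalSpace α]

theorem dist_coe_le_dist [PseudoMetricSpace β] [Zero β] (x y : C₀(α, β)) (a : α) :
    dist (x a) (y a) ≤ dist x y :=
  BoundedContinuousFunction.dist_coe_le_dist (f := x.toBCF) (g := y.toBCF) a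

theorem dist_le [PseudoMetricSpace β] [Zero β] {x y : C₀(α, β)} {C : ℝ} (hC : 0 ≤ C) :
    dist x y ≤ C ↔ ∀ a, dist (x a) (y a) ≤ C :=
  BoundedContinuousFunction.dist_le hC

theorem norm_coe_le_norm [SeminormedAddCommGroup β] (x : C₀(α, β)) (a : α) : ‖x a‖ ≤ ‖x‖ :=
  x.toBCF.norm_coe_le_norm a

theorem norm_le [SeminormedAddCommGroup β] {x : C₀(α, β)} {C : ℝ} (hC : 0 ≤ C) :
    ‖x‖ ≤ C ↔ ∀ a, ‖x a‖ ≤ C :=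
  BoundedContinuousFunction.norm_le hC

end Bounds

section Sequences

variable {E F : Type*} [NormedAddCommGroup E] [NormedAddCommGroup F]

theorem tendsto_atTop_zero (x : C₀(ℕ, E)) : Tendsto x atTop (𝓝 0) := by
  simpa only [cocompact_eq_atTop] using zero_at_infty x

open Classical in
/-- Junk value `0` when `g` does not tend to `0`. -/
def ofSeq (g : ℕ → E) : C₀(ℕ, E) :=
  if hg : Tendsto g atTop (𝓝 0) then
    ⟨⟨g, continuous_of_discreteTopology⟩, by rwa [cocompact_eq_atTop]⟩
  else 0

theorem ofSeq_apply {g : ℕ → E} (hg : Tendsto g atTop (𝓝 0)) (t : ℕ) : ofSeq g t = g t := by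
  rw [ofSeq, dif_pos hg]
  rfl

variable [NormedSpace ℝ E] [NormedSpace ℝ F]

def shift : C₀(ℕ, E) →L[ℝ] C₀(ℕ, E) :=
  (compLinearMap ⟨⟨(· + 1), continuous_of_discreteTopology⟩, by
      simpa only [cocompact_eq_atTop] using tendsto_add_atTop_nat 1⟩).mkContinuous 1
    fun x => by
      rw [one_mul, norm_le (norm_nonneg x)]
      exact fun t => x.norm_coe_le_norm (t + 1)

@[simp]
theorem shift_apply (x : C₀(ℕ, E)) (t : ℕ) : shift x t = x (t + 1) :=
  rfl

theorem tendsto_apply_of_forall_norm_le {A : ℕ → E →L[ℝ] F} {C : ℝ} (hA : ∀ t, ‖A t‖ ≤ C)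
    (h : C₀(ℕ, E)) : Tendsto (fun t => A t (h t)) atTop (𝓝 0) :=
  squeeze_zero_norm (fun t => (A t).le_of_opNorm_le (hA t) (h t))
    (by simpa using h.tendsto_atTop_zero.norm.const_mul C)

open Classical in
/-- Junk value `0` when the family `A` is unbounded. -/
def diagonal (A : ℕ → E →L[ℝ] F) : C₀(ℕ, E) →L[ℝ] C₀(ℕ, F) :=
  if hA : ∃ C, ∀ t, ‖A t‖ ≤ C then
    have key (h : C₀(ℕ, E)) (t : ℕ) : ofSeq (fun t => A t (h t)) t = A t (h t) :=
      ofSeq_apply (tendsto_apply_of_forall_norm_le hA.choose_spec h) t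
    LinearMap.mkContinuousOfExistsBound
      { toFun := fun h => ofSeq fun t => A t (h t)
        map_add' := fun h k => by
          ext t
          rw [key]
          simp only [key, coe_add, Pi.add_apply, map_add]
        map_smul' := fun c h => by
          ext t
          rw [key]
          simp only [key, coe_smul, Pi.smul_apply, map_smul, RingHom.id_apply] }
      ⟨max hA.choose 0, fun h => (norm_le (by positivity)).2 fun t =>
        (key h t).symm ▸ (A t).le_of_opNorm_le_of_le
          ((hA.choose_spec t).trans (le_max_left _ _)) (h.norm_coe_le_norm t)⟩
  else 0

theorem diagonal_apply {A : ℕ → E →L[ℝ] F} {C : ℝ} (hA : ∀ t, ‖A t‖ ≤ C) (h : C₀(ℕ, E))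
    (t : ℕ) : diagonal A h t = A t (h t) := by
  rw [diagonal, dif_pos ⟨C, hA⟩]
  exact ofSeq_apply (tendsto_apply_of_forall_norm_le hA h) t

theorem norm_diagonal_sub_diagonal_le {A B : ℕ → E →L[ℝ] F} (hA : ∃ C, ∀ t, ‖A t‖ ≤ C)
    (hB : ∃ C, ∀ t, ‖B t‖ ≤ C) {C : ℝ} (hC : 0 ≤ C) (hAB : ∀ t, ‖A t - B t‖ ≤ C) :
    ‖diagonal A - diagonal B‖ ≤ C := by
  obtain ⟨CA, hA⟩ := hA
  obtain ⟨CB, hB⟩ := hB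
  refine ContinuousLinearMap.opNorm_le_bound _ hC fun h => (norm_le (by positivity)).2 fun t => ?_
  rw [_root_.sub_apply, coe_sub, Pi.sub_apply, diagonal_apply hA, diagonal_apply hB,
    ← _root_.sub_apply]
  exact (A t - B t).le_of_opNorm_le_of_le (hAB t) (h.norm_coe_le_norm t)

end Sequences

section Differentiation

variable {E F : Type*} [NormedAddCommGroup E] [NormedSpace ℝ E] [NormedAddCommGroup F]
  [NormedSpace ℝ F]

theorem continuous_diagonal {A : ℕ → E → E →L[ℝ] F} (hAc : ∀ t, Continuous (A t))
    (hA : TendstoUniformly (fun z t => A t z) 0 (𝓝 0)) :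
    Continuous fun x : C₀(ℕ, E) => diagonal fun t => A t (x t) := by
  refine (Metric.continuous_iff (α := C₀(ℕ, E)) (β := C₀(ℕ, E) →L[ℝ] C₀(ℕ, F))).2
    fun x ε hε => ?_
  obtain ⟨δ, hδ, hAδ⟩ := Metric.eventually_nhds_iff.1 <| Metric.equicontinuousAt_iff_right.1
    (equicontinuousAt_add_of_tendstoUniformly hAc hA x.tendsto_atTop_zero) (ε / 2) (half_pos hε)
  refine ⟨δ, hδ, fun y hy => ?_⟩
  rw [(dist_eq_norm (diagonal fun t => A t (y t)) _ :)]
  refine (norm_diagonal_sub_diagonal_le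
    (exists_forall_norm_le_of_tendstoUniformly hA y.tendsto_atTop_zero)
    (exists_forall_norm_le_of_tendstoUniformly hA x.tendsto_atTop_zero) (half_pos hε).le
    fun t => ?_).trans_lt (half_lt_self hε)
  have := hAδ (y := y t - x t) (by
    rw [dist_zero_right, ← dist_eq_norm]; exact (dist_coe_le_dist y x t).trans_lt hy) t
  rw [add_zero, add_sub_cancel, dist_comm, dist_eq_norm] at this
  exact this.le

theorem hasFDerivAt_diagonal_fderiv {g : ℕ → E → F} (hg : ∀ t, Differentiable ℝ (g t))
    (hg'c : ∀ t, Continuous (fderiv ℝ (g t)))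
    (hg' : TendstoUniformly (fun z t => fderiv ℝ (g t) z) 0 (𝓝 0))
    {N : C₀(ℕ, E) → C₀(ℕ, F)} (hN : ∀ y t, N y t = g t (y t)) (x : C₀(ℕ, E)) :
    HasFDerivAt N (diagonal fun t => fderiv ℝ (g t) (x t)) x := by
  obtain ⟨C, hC⟩ := exists_forall_norm_le_of_tendstoUniformly hg' x.tendsto_atTop_zero
  rw [hasFDerivAt_iff_isLittleO_nhds_zero, Asymptotics.isLittleO_iff]
  intro c hc
  obtain ⟨δ, hδ, hg'δ⟩ := Metric.eventually_nhds_iff.1 <| Metric.equicontinuousAt_iff_right.1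
    (equicontinuousAt_add_of_tendstoUniformly hg'c hg' x.tendsto_atTop_zero) c hc
  filter_upwards [ball_mem_nhds 0 hδ] with h hh
  rw [mem_ball_zero_iff] at hh
  refine (norm_le (by positivity)).2 fun t => ?_
  have hball (w) (hw : w ∈ ball (x t) δ) : ‖fderiv ℝ (g t) w - fderiv ℝ (g t) (x t)‖ ≤ c := by
    have := hg'δ (y := w - x t) (by rwa [dist_zero_right, ← dist_eq_norm]) t
    rw [add_zero, add_sub_cancel, dist_comm, dist_eq_norm] at this
    exact this.le
  have hmvt := (convex_ball (x t) δ).norm_image_sub_le_of_norm_fderiv_le'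
    (fun w _ => (hg t).differentiableAt) hball (mem_ball_self hδ)
    (by rw [mem_ball, dist_self_add_left]; exact (h.norm_coe_le_norm t).trans_lt hh)
  rw [add_sub_cancel_left] at hmvt
  rw [coe_sub, coe_sub, Pi.sub_apply, Pi.sub_apply, hN, hN, diagonal_apply hC, coe_add,
    Pi.add_apply]
  exact hmvt.trans (mul_le_mul_of_nonneg_left (h.norm_coe_le_norm t) hc.le)

end Differentiation

section Nemytskii

variable {E P F : Type*} [NormedAddCommGroup E] [NormedAddCommGroup P] [NormedAddCommGroup F]

def nemytskii (f : E → P → F) (p : C₀(ℕ, E) × lp (fun _ : ℕ => P) ⊤) : C₀(ℕ, F) :=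
  ofSeq fun t => f (p.1 t) (p.2 t)

variable [ProperSpace P] {f : E → P → F} {U : Set P} (hU : IsClosed U)
  (hfc : ContinuousOn (fun q : E × P => f q.1 q.2) (univ ×ˢ U))
  (hf0 : ∀ v ∈ U, f 0 v = 0)
include hU hfc hf0

theorem tendsto_nemytskii_seq (x : C₀(ℕ, E)) {u : lp (fun _ : ℕ => P) ⊤} (hu : ∀ t, u t ∈ U) :
    Tendsto (fun t => f (x t) (u t)) atTop (𝓝 0) := by
  refine Metric.tendsto_nhds.2 fun ε hε => ?_
  obtain ⟨δ, hδ, hfδ⟩ := IsCompact.exists_forall_dist_lt_of_continuousOn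
    (isCompact_singleton.prod (lp.isBounded_range u).isCompact_closure)
      (Set.prod_mono (subset_univ _) (closure_minimal (range_subset_iff.2 hu) hU)) hfc hε
  filter_upwards [Metric.tendsto_nhds.1 x.tendsto_atTop_zero δ hδ] with t ht
  have := hfδ (0, u t) ⟨rfl, subset_closure ⟨t, rfl⟩⟩ (x t, u t) ⟨trivial, hu t⟩
    (by simpa [Prod.dist_eq] using ht)
  simpa [hf0 _ (hu t)] using this

theorem nemytskii_apply (x : C₀(ℕ, E)) {u : lp (fun _ : ℕ => P) ⊤} (hu : ∀ t, u t ∈ U) (t : ℕ) :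
    nemytskii f (x, u) t = f (x t) (u t) :=
  ofSeq_apply (tendsto_nemytskii_seq hU hfc hf0 x hu) t

theorem continuousOn_nemytskii :
    ContinuousOn (nemytskii f) (univ ×ˢ {u : lp (fun _ : ℕ => P) ⊤ | ∀ t, u t ∈ U}) := by
  rintro ⟨x₀, u₀⟩ ⟨-, hu₀⟩
  refine Metric.continuousWithinAt_iff.2 fun ε hε => ?_
  obtain ⟨δ, hδ, hfδ⟩ := IsCompact.exists_forall_dist_lt_of_continuousOn
    (x₀.tendsto_atTop_zero.isCompact_insert_range.prod (lp.isBounded_range u₀).isCompact_closure)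
    (Set.prod_mono (subset_univ _) (closure_minimal (range_subset_iff.2 hu₀) hU)) hfc
    (half_pos hε)
  refine ⟨δ, hδ, ?_⟩
  rintro ⟨x, u⟩ ⟨-, hu⟩ hdist
  refine lt_of_le_of_lt ((dist_le (half_pos hε).le).2 fun t => ?_) (half_lt_self hε)
  rw [nemytskii_apply hU hfc hf0 x hu, nemytskii_apply hU hfc hf0 x₀ hu₀]
  refine (hfδ (x₀ t, u₀ t) ⟨mem_insert_of_mem _ ⟨t, rfl⟩, subset_closure ⟨t, rfl⟩⟩ (x t, u t)
    ⟨trivial, hu t⟩ (lt_of_le_of_lt ?_ hdist)).le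
  exact max_le_max (dist_coe_le_dist x x₀ t) (lp.dist_coe_le_dist ENNReal.top_ne_zero u u₀ t)

end Nemytskii

end ZeroAtInftyContinuousMap

open ZeroAtInftyContinuousMap in
theorem stmt_5_general {n d : ℕ}
    (U : Set (Fin d → ℝ)) (hUcl : IsClosed U)
    (f : (Fin n → ℝ) → (Fin d → ℝ) → (Fin n → ℝ))
    -- (a)
    (hfc : ContinuousOn (fun q : (Fin n → ℝ) × (Fin d → ℝ) => f q.1 q.2) (Set.univ ×ˢ U))
    -- (b)
    (hf0 : ∀ u ∈ U, f 0 u = 0)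
    -- (c)
    (hfd : ∀ u ∈ U, (∀ x : Fin n → ℝ, DifferentiableAt ℝ (fun x' => f x' u) x) ∧
      Continuous (fun x : Fin n → ℝ => fderiv ℝ (fun x' => f x' u) x))
    -- (e)
    (hlim : ∀ B ⊆ U, B.Nonempty → IsBounded B →
      ∀ ε > (0 : ℝ), ∃ δ > (0 : ℝ), ∀ x : Fin n → ℝ, ‖x‖ < δ → ∀ u ∈ B,
        ‖fderiv ℝ (fun x' => f x' u) x‖ < ε) :
    ∃ T : C₀(ℕ, Fin n → ℝ) × lp (fun _ : ℕ => Fin d → ℝ) ⊤ → C₀(ℕ, Fin n → ℝ),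
      -- T is the operator 𝒯 on c₀(ℕ, ℝⁿ) × ℓ∞(ℕ, U) (in particular 𝒯 is well defined)
      (∀ (x : C₀(ℕ, Fin n → ℝ)) (u : lp (fun _ : ℕ => Fin d → ℝ) ⊤),
        (∀ t : ℕ, u t ∈ U) → ∀ t : ℕ, T (x, u) t = x (t + 1) - f (x t) (u t)) ∧
      -- (α)
      ContinuousOn T
        (Set.univ ×ˢ {u : lp (fun _ : ℕ => Fin d → ℝ) ⊤ | ∀ t : ℕ, u t ∈ U}) ∧
      -- (β)
      (∀ u : lp (fun _ : ℕ => Fin d → ℝ) ⊤, (∀ t : ℕ, u t ∈ U) →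
        (∀ x : C₀(ℕ, Fin n → ℝ), DifferentiableAt ℝ (fun x' => T (x', u)) x) ∧
        Continuous (fun x : C₀(ℕ, Fin n → ℝ) => fderiv ℝ (fun x' => T (x', u)) x)) := by
  refine ⟨fun p => shift p.1 - nemytskii f p, fun x u hu t => ?_,
    (shift.continuous.comp continuous_fst).continuousOn.sub (continuousOn_nemytskii hUcl hfc hf0),
    fun u hu => ?_⟩
  · simp [nemytskii_apply hUcl hfc hf0 x hu]
  have hf'0 : TendstoUniformly (fun z t => fderiv ℝ (fun x' => f x' (u t)) z) 0 (𝓝 0) := by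
    refine Metric.tendstoUniformly_iff.2 fun ε hε => ?_
    obtain ⟨δ, hδ, hfδ⟩ := hlim (range u) (range_subset_iff.2 hu) (range_nonempty _)
      (lp.isBounded_range u) ε hε
    filter_upwards [Metric.ball_mem_nhds 0 hδ] with z hz t
    simpa using hfδ z (mem_ball_zero_iff.1 hz) (u t) ⟨t, rfl⟩
  have hderiv (x : C₀(ℕ, Fin n → ℝ)) : HasFDerivAt (fun y => shift y - nemytskii f (y, u))
      (shift - diagonal fun t => fderiv ℝ (fun x' => f x' (u t)) (x t)) x :=
    ((shift (E := Fin n → ℝ)).hasFDerivAt (x := x)).sub <|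
      hasFDerivAt_diagonal_fderiv (g := fun t x' => f x' (u t)) (fun t => (hfd _ (hu t)).1)
        (fun t => (hfd _ (hu t)).2) hf'0 (fun y => nemytskii_apply hUcl hfc hf0 y hu) x
  refine ⟨fun x => (hderiv x).differentiableAt, ?_⟩
  simp only [fun x => (hderiv x).fderiv]
  exact continuous_const.sub (continuous_diagonal (fun t => (hfd _ (hu t)).2) hf'0)

/-- Proposition 3.10.  Let `U ⊆ ℝᵈ` be nonempty closed and
`f : ℝⁿ × U → ℝⁿ` (a total function) satisfy (a) continuity on `ℝⁿ × U`; (b)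
`f(0, u) = 0` for all `u ∈ U`; (c) existence of the partial differential `D₁f(x, u)` for
all `u ∈ U`, `x ∈ ℝⁿ`, with `D₁f(·, u)` continuous; (d) `D₁f` maps bounded subsets of
`ℝⁿ × U` to bounded sets of operators; (e) `lim_{x→0} sup_{u ∈ B} ‖D₁f(x,u)‖ = 0` for
every nonempty bounded `B ⊆ U`.  Then the operator `𝒯(x,u) = (x_{t+1} − f(x_t,u_t))_t`
(rendered as an operator `T` with values in `c₀(ℕ, ℝⁿ)` agreeing with this formula on
`c₀(ℕ, ℝⁿ) × ℓ∞(ℕ, U)`) satisfies: (α) `T` is continuous on `c₀(ℕ, ℝⁿ) × ℓ∞(ℕ, U)`;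
(β) for every `u ∈ ℓ∞(ℕ, U)`, `D₁T(x, u)` exists at every `x` and `x ↦ D₁T(x, u)` is
continuous from `c₀(ℕ, ℝⁿ)` to `L(c₀(ℕ, ℝⁿ), c₀(ℕ, ℝⁿ))`. -/
theorem stmt_5 {n d : ℕ}
    (U : Set (Fin d → ℝ)) (hUne : U.Nonempty) (hUcl : IsClosed U)
    (f : (Fin n → ℝ) → (Fin d → ℝ) → (Fin n → ℝ))
    -- (a)
    (hfc : ContinuousOn (fun q : (Fin n → ℝ) × (Fin d → ℝ) => f q.1 q.2) (Set.univ ×ˢ U))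
    -- (b)
    (hf0 : ∀ u ∈ U, f 0 u = 0)
    -- (c)
    (hfd : ∀ u ∈ U, (∀ x : Fin n → ℝ, DifferentiableAt ℝ (fun x' => f x' u) x) ∧
      Continuous (fun x : Fin n → ℝ => fderiv ℝ (fun x' => f x' u) x))
    -- (d)
    (hbdd : ∀ s : Set ((Fin n → ℝ) × (Fin d → ℝ)), s ⊆ Set.univ ×ˢ U → IsBounded s →
      IsBounded ((fun q : (Fin n → ℝ) × (Fin d → ℝ) =>
        fderiv ℝ (fun x' => f x' q.2) q.1) '' s))
    -- (e)
    (hlim : ∀ B ⊆ U, B.Nonempty → IsBounded B →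
      ∀ ε > (0 : ℝ), ∃ δ > (0 : ℝ), ∀ x : Fin n → ℝ, ‖x‖ < δ → ∀ u ∈ B,
        ‖fderiv ℝ (fun x' => f x' u) x‖ < ε) :
    ∃ T : C₀(ℕ, Fin n → ℝ) × lp (fun _ : ℕ => Fin d → ℝ) ⊤ → C₀(ℕ, Fin n → ℝ),
      -- T is the operator 𝒯 on c₀(ℕ, ℝⁿ) × ℓ∞(ℕ, U) (in particular 𝒯 is well defined)
      (∀ (x : C₀(ℕ, Fin n → ℝ)) (u : lp (fun _ : ℕ => Fin d → ℝ) ⊤),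
        (∀ t : ℕ, u t ∈ U) → ∀ t : ℕ, T (x, u) t = x (t + 1) - f (x t) (u t)) ∧
      -- (α)
      ContinuousOn T
        (Set.univ ×ˢ {u : lp (fun _ : ℕ => Fin d → ℝ) ⊤ | ∀ t : ℕ, u t ∈ U}) ∧
      -- (β)
      (∀ u : lp (fun _ : ℕ => Fin d → ℝ) ⊤, (∀ t : ℕ, u t ∈ U) →
        (∀ x : C₀(ℕ, Fin n → ℝ), DifferentiableAt ℝ (fun x' => T (x', u)) x) ∧
        Continuous (fun x : C₀(ℕ, Fin n → ℝ) => fderiv ℝ (fun x' => T (x', u)) x)) :=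
  stmt_5_general U hUcl f hfc hf0 hfd hlim
end
end

section
/- Let U be a nonempty closed subset of ℝᵈ, φ : ℝⁿ × U → ℝ of class C¹ on ℝⁿ × U, and β ∈ (0, 1). Define J(x, u) := Σ_{t=0}^{∞} βᵗ φ(x_t, u_t) for x ∈ c₀(ℕ, ℝⁿ) and u ∈ ℓ∞(ℕ, U). Then J is a continuously Fréchet differentiable real-valued functional on c₀(ℕ, ℝⁿ) × ℓ∞(ℕ, U), and for all x ∈ c₀(ℕ, ℝⁿ), u ∈ ℓ∞(ℕ, U), δx ∈ c₀(ℕ, ℝⁿ), δu ∈ ℓ∞(ℕ, ℝᵈ), one has DJ(x, u)(δx, δu) = Σ_{t=0}^{∞} βᵗ ( D₁φ(x_t, u_t)δx_t + D₂φ(x_t, u_t)δu_t ). -/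
open Filter Topology Bornology Set ZeroAtInfty
open scoped ENNReal

noncomputable section

/-!
Near any `(x, u)` with `u` staying a uniform distance inside `U₁`, all the points `(x_t, u_t)`
lie in one compact subset of `ℝⁿ × U₁`, on which `φ` and `Dφ` are bounded by some `M`. The
terms `βᵗ φ(x_t, u_t)` of `J` and their derivatives are thus dominated, locally uniformly, by
the geometric series `M βᵗ`, so `J` may be differentiated term by term and its derivative is a
locally uniform limit of continuous maps. A sequence with values in the closed set `U` has
compact closure of its range, hence stays a uniform distance inside the open set `U₁`.
-/

open Metric

section LocallyDominatedSeries

variable {E F : Type*} [NormedAddCommGroup E] [NormedSpace ℝ E]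
  [NormedAddCommGroup F] [NormedSpace ℝ F] {f : ℕ → E → F} {f' : ℕ → E → E →L[ℝ] F} {W : Set E}

theorem exists_ball_of_locally_dominated (hW : IsOpen W)
    (hdom : ∀ p ∈ W, ∃ c : ℕ → ℝ, Summable c ∧ ∀ᶠ q in 𝓝 p, ∀ t, ‖f' t q‖ ≤ c t)
    {p : E} (hp : p ∈ W) :
    ∃ r > 0, ball p r ⊆ W ∧ ∃ c : ℕ → ℝ, Summable c ∧
      ∀ t, ∀ q ∈ ball p r, ‖f' t q‖ ≤ c t := by
  obtain ⟨c, hc, hbound⟩ := hdom p hp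
  obtain ⟨r, hr, hball⟩ := eventually_nhds_iff_ball.1 (hbound.and (hW.mem_nhds hp))
  exact ⟨r, hr, fun q hq => (hball q hq).2, c, hc, fun t q hq => (hball q hq).1 t⟩

variable [CompleteSpace F]

theorem hasFDerivAt_tsum_of_locally_dominated (hW : IsOpen W)
    (hf : ∀ t, ∀ p ∈ W, HasFDerivAt (f t) (f' t p) p)
    (hdom : ∀ p ∈ W, ∃ c : ℕ → ℝ, Summable c ∧ ∀ᶠ q in 𝓝 p, ∀ t, ‖f' t q‖ ≤ c t)
    {p : E} (hp : p ∈ W) (hsum : Summable fun t => f t p) :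
    HasFDerivAt (fun q => ∑' t, f t q) (∑' t, f' t p) p := by
  obtain ⟨r, hr, hrW, c, hc, hbound⟩ := exists_ball_of_locally_dominated hW hdom hp
  exact hasFDerivAt_tsum_of_isPreconnected hc isOpen_ball
    (convex_ball p r).isPreconnected (fun t q hq => hf t q (hrW hq)) hbound
    (mem_ball_self hr) hsum (mem_ball_self hr)

theorem continuousOn_tsum_of_locally_dominated (hW : IsOpen W)
    (hf' : ∀ t, ContinuousOn (f' t) W)
    (hdom : ∀ p ∈ W, ∃ c : ℕ → ℝ, Summable c ∧ ∀ᶠ q in 𝓝 p, ∀ t, ‖f' t q‖ ≤ c t) :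
    ContinuousOn (fun p => ∑' t, f' t p) W := by
  intro p hp
  obtain ⟨r, hr, hrW, c, hc, hbound⟩ := exists_ball_of_locally_dominated hW hdom hp
  have hcont := continuousOn_tsum (fun t => (hf' t).mono hrW) hc hbound
  exact (hcont.continuousAt (ball_mem_nhds p hr)).continuousWithinAt

theorem contDiffOn_tsum_of_locally_dominated (hW : IsOpen W)
    (hf : ∀ t, ∀ p ∈ W, HasFDerivAt (f t) (f' t p) p) (hf' : ∀ t, ContinuousOn (f' t) W)
    (hdom : ∀ p ∈ W, ∃ c : ℕ → ℝ, Summable c ∧ ∀ᶠ q in 𝓝 p, ∀ t, ‖f' t q‖ ≤ c t)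
    (hsum : ∀ p ∈ W, Summable fun t => f t p) :
    ContDiffOn ℝ 1 (fun q => ∑' t, f t q) W := by
  have hderiv p (hp : p ∈ W) := hasFDerivAt_tsum_of_locally_dominated hW hf hdom hp (hsum p hp)
  rw [← zero_add 1, contDiffOn_succ_iff_fderiv_of_isOpen hW, contDiffOn_zero]
  refine ⟨fun p hp => (hderiv p hp).differentiableAt.differentiableWithinAt, by simp, ?_⟩
  exact (continuousOn_tsum_of_locally_dominated hW hf' hdom).congr
    fun p hp => (hderiv p hp).fderiv

theorem fderiv_tsum_apply_of_locally_dominated (hW : IsOpen W)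
    (hf : ∀ t, ∀ p ∈ W, HasFDerivAt (f t) (f' t p) p)
    (hdom : ∀ p ∈ W, ∃ c : ℕ → ℝ, Summable c ∧ ∀ᶠ q in 𝓝 p, ∀ t, ‖f' t q‖ ≤ c t)
    {p : E} (hp : p ∈ W) (hsum : Summable fun t => f t p) (v : E) :
    fderiv ℝ (fun q => ∑' t, f t q) p v = ∑' t, f' t p v := by
  obtain ⟨r, hr, -, c, hc, hbound⟩ := exists_ball_of_locally_dominated hW hdom hp
  have hsum' : Summable fun t => f' t p :=
    hc.of_norm_bounded fun t => hbound t p (mem_ball_self hr)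
  rw [(hasFDerivAt_tsum_of_locally_dominated hW hf hdom hp hsum).fderiv]
  exact (ContinuousLinearMap.apply ℝ F v).map_tsum hsum'

end LocallyDominatedSeries

namespace ZeroAtInftyContinuousMap

variable {α β 𝕜 : Type*} [TopologicalSpace α] [NormedAddCommGroup β] [NormedField 𝕜]
  [NormedSpace 𝕜 β]

variable (𝕜) in
def evalCLM (a : α) : C₀(α, β) →L[𝕜] β :=
  LinearMap.mkContinuous
    { toFun := fun f => f a
      map_add' := fun _ _ => rfl
      map_smul' := fun _ _ => rfl } 1
    fun f => by simpa using BoundedContinuousFunction.norm_coe_le_norm f.toBCF a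

end ZeroAtInftyContinuousMap

local notation "ℓ∞(" Y ")" => lp (fun _ : ℕ => Y) ∞

section Sequences

variable {X Y : Type*} [NormedAddCommGroup X] [NormedAddCommGroup Y]

theorem isBounded_range_lp_infty (u : ℓ∞(Y)) : IsBounded (range u) :=
  isBounded_iff_forall_norm_le.2
    ⟨‖u‖, by rintro _ ⟨t, rfl⟩; exact lp.norm_apply_le_norm ENNReal.top_ne_zero u t⟩

def uniformlyInside (V : Set Y) : Set ℓ∞(Y) :=
  {u | ∃ ε > 0, thickening ε (range u) ⊆ V}

theorem isOpen_uniformlyInside (V : Set Y) : IsOpen (uniformlyInside V) := by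
  refine isOpen_iff.2 fun u ⟨ε, hε, hεV⟩ => ⟨ε / 2, half_pos hε, fun v hv => ?_⟩
  have hvu : range v ⊆ thickening (ε / 2) (range u) := by
    rintro _ ⟨t, rfl⟩
    refine mem_thickening_iff.2 ⟨u t, ⟨t, rfl⟩, ?_⟩
    calc dist (v t) (u t) ≤ 1 * dist v u := (lp.lipschitzWith_one_eval ∞ t).dist_le_mul v u
      _ < ε / 2 := by rw [one_mul]; exact hv
  refine ⟨ε / 2, half_pos hε, (thickening_subset_of_subset _ hvu).trans ?_⟩
  exact (thickening_thickening_subset _ _ _).trans (by rwa [add_halves])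

theorem apply_mem_of_mem_uniformlyInside {V : Set Y} {u : ℓ∞(Y)} (hu : u ∈ uniformlyInside V)
    (t : ℕ) : u t ∈ V := by
  obtain ⟨ε, hε, hεV⟩ := hu
  exact hεV (self_subset_thickening hε _ ⟨t, rfl⟩)

theorem setOf_forall_mem_subset_uniformlyInside [ProperSpace Y] {U V : Set Y}
    (hU : IsClosed U) (hV : IsOpen V) (hUV : U ⊆ V) :
    {u : ℓ∞(Y) | ∀ t, u t ∈ U} ⊆ uniformlyInside V := by
  intro u hu
  have hK : IsCompact (closure (range u)) :=
    isCompact_of_isClosed_isBounded isClosed_closure (isBounded_range_lp_infty u).closure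
  obtain ⟨δ, hδ, hδV⟩ :=
    hK.exists_thickening_subset_open hV ((closure_minimal (range_subset_iff.2 hu) hU).trans hUV)
  exact ⟨δ, hδ, by rwa [← thickening_closure]⟩

theorem exists_isCompact_apply_mem_of_mem_uniformlyInside [ProperSpace Y] {V : Set Y}
    {u : ℓ∞(Y)} (hu : u ∈ uniformlyInside V) :
    ∃ K, IsCompact K ∧ K ⊆ V ∧ ∀ᶠ v in 𝓝 u, ∀ t, v t ∈ K := by
  obtain ⟨ε, hε, hεV⟩ := hu
  refine ⟨cthickening (ε / 2) (range u),
    isCompact_of_isClosed_isBounded isClosed_cthickening (isBounded_range_lp_infty u).cthickening,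
    (cthickening_subset_thickening' hε (half_lt_self hε) _).trans hεV, ?_⟩
  filter_upwards [ball_mem_nhds u (half_pos hε)] with v hv t
  refine mem_cthickening_of_dist_le _ (u t) _ _ ⟨t, rfl⟩ ?_
  calc dist (v t) (u t) ≤ 1 * dist v u := (lp.lipschitzWith_one_eval ∞ t).dist_le_mul v u
    _ ≤ ε / 2 := by rw [one_mul]; exact (mem_ball.1 hv).le

variable [NormedSpace ℝ X] [NormedSpace ℝ Y]

def seqEvalCLM (t : ℕ) : C₀(ℕ, X) × ℓ∞(Y) →L[ℝ] X × Y :=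
  (ZeroAtInftyContinuousMap.evalCLM ℝ t).prodMap (lp.evalCLM ℝ (fun _ : ℕ => Y) ∞ t)

theorem seqEvalCLM_apply (t : ℕ) (p : C₀(ℕ, X) × ℓ∞(Y)) :
    seqEvalCLM t p = (p.1 t, p.2 t) := rfl

theorem norm_seqEvalCLM_le (t : ℕ) : ‖seqEvalCLM (X := X) (Y := Y) t‖ ≤ 1 :=
  ContinuousLinearMap.opNorm_le_bound _ zero_le_one fun p => by
    rw [seqEvalCLM_apply, one_mul, Prod.norm_def, Prod.norm_def]
    exact max_le_max (BoundedContinuousFunction.norm_coe_le_norm p.1.toBCF t)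
      (lp.norm_apply_le_norm ENNReal.top_ne_zero p.2 t)

theorem exists_isCompact_seqEvalCLM_mem [ProperSpace X] [ProperSpace Y] {V : Set Y}
    {p : C₀(ℕ, X) × ℓ∞(Y)} (hp : p.2 ∈ uniformlyInside V) :
    ∃ S, IsCompact S ∧ S ⊆ univ ×ˢ V ∧ ∀ᶠ q in 𝓝 p, ∀ t, seqEvalCLM t q ∈ S := by
  obtain ⟨K, hK, hKV, hnear⟩ := exists_isCompact_apply_mem_of_mem_uniformlyInside hp
  have hnorm : ∀ᶠ q in 𝓝 p, ‖q.1‖ < ‖p.1‖ + 1 :=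
    (continuous_fst.norm.tendsto p).eventually (gt_mem_nhds (lt_add_one _))
  refine ⟨closedBall 0 (‖p.1‖ + 1) ×ˢ K, (isCompact_closedBall _ _).prod hK,
    prod_mono (subset_univ _) hKV, ?_⟩
  filter_upwards [hnorm, continuous_snd.continuousAt.eventually hnear] with q hq1 hq2 t
  refine ⟨mem_closedBall_zero_iff.2 ?_, hq2 t⟩
  exact (BoundedContinuousFunction.norm_coe_le_norm q.1.toBCF t).trans hq1.le


end Sequences

section PartialDerivatives

open Function

variable {X Y Z : Type*} [NormedAddCommGroup X] [NormedSpace ℝ X] [NormedAddCommGroup Y]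
  [NormedSpace ℝ Y] [NormedAddCommGroup Z] [NormedSpace ℝ Z]

theorem fderiv_uncurry_apply {φ : X → Y → Z} {a : X} {b : Y}
    (h : DifferentiableAt ℝ (uncurry φ) (a, b)) (δa : X) (δb : Y) :
    fderiv ℝ (uncurry φ) (a, b) (δa, δb)
      = fderiv ℝ (fun y => φ y b) a δa + fderiv ℝ (fun v => φ a v) b δb := by
  have hleft : HasFDerivAt (fun y => φ y b)
      ((fderiv ℝ (uncurry φ) (a, b)).comp (.inl ℝ X Y)) a :=
    (h.hasFDerivAt.comp a (hasFDerivAt_prodMk_left (𝕜 := ℝ) (F := Y) a b) :)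
  have hright : HasFDerivAt (fun v => φ a v)
      ((fderiv ℝ (uncurry φ) (a, b)).comp (.inr ℝ X Y)) b :=
    (h.hasFDerivAt.comp b (hasFDerivAt_prodMk_right (𝕜 := ℝ) a b) :)
  rw [hleft.fderiv, hright.fderiv, ContinuousLinearMap.comp_apply,
    ContinuousLinearMap.comp_apply, ← map_add]
  simp

end PartialDerivatives

section DiscountedSum

open Function

variable {X Y : Type*} [NormedAddCommGroup X] [NormedSpace ℝ X]
  [NormedAddCommGroup Y] [NormedSpace ℝ Y] {φ : X → Y → ℝ} {V : Set Y} {β : ℝ}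

def discountedSum (β : ℝ) (φ : X → Y → ℝ) (p : C₀(ℕ, X) × ℓ∞(Y)) : ℝ :=
  ∑' t, β ^ t * φ (p.1 t) (p.2 t)

def discountedTermFDeriv (β : ℝ) (φ : X → Y → ℝ) (t : ℕ) (p : C₀(ℕ, X) × ℓ∞(Y)) :
    C₀(ℕ, X) × ℓ∞(Y) →L[ℝ] ℝ :=
  β ^ t • (fderiv ℝ (uncurry φ) (p.1 t, p.2 t)).comp (seqEvalCLM t)

theorem hasFDerivAt_discountedTerm (hV : IsOpen V) (hφ : ContDiffOn ℝ 1 (uncurry φ) (univ ×ˢ V))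
    (t : ℕ) {p : C₀(ℕ, X) × ℓ∞(Y)} (hp : p.2 t ∈ V) :
    HasFDerivAt (fun q : C₀(ℕ, X) × ℓ∞(Y) => β ^ t * φ (q.1 t) (q.2 t))
      (discountedTermFDeriv β φ t p) p := by
  have hφp : DifferentiableAt ℝ (uncurry φ) (p.1 t, p.2 t) :=
    (hφ.differentiableOn one_ne_zero).differentiableAt
      ((isOpen_univ.prod hV).mem_nhds ⟨mem_univ _, hp⟩)
  exact (hφp.hasFDerivAt.comp p (seqEvalCLM t).hasFDerivAt).const_mul (β ^ t)

theorem continuousOn_discountedTermFDeriv (hV : IsOpen V)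
    (hφ : ContDiffOn ℝ 1 (uncurry φ) (univ ×ˢ V)) (t : ℕ) :
    ContinuousOn (discountedTermFDeriv β φ t) (univ ×ˢ uniformlyInside V) := by
  have hDφ : ContinuousOn (fun p : C₀(ℕ, X) × ℓ∞(Y) => fderiv ℝ (uncurry φ) (seqEvalCLM t p))
      (univ ×ˢ uniformlyInside V) :=
    (hφ.continuousOn_fderiv_of_isOpen (isOpen_univ.prod hV) le_rfl).comp
      (seqEvalCLM t).continuous.continuousOn
      fun p hp => ⟨mem_univ _, apply_mem_of_mem_uniformlyInside hp.2 t⟩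
  have hcomp := ((ContinuousLinearMap.compL ℝ (C₀(ℕ, X) × ℓ∞(Y)) (X × Y) ℝ).flip
    (seqEvalCLM t)).continuous
  exact (hcomp.comp_continuousOn hDφ).const_smul (β ^ t)

theorem norm_discountedTermFDeriv_le (t : ℕ) (p : C₀(ℕ, X) × ℓ∞(Y)) :
    ‖discountedTermFDeriv β φ t p‖ ≤ |β| ^ t * ‖fderiv ℝ (uncurry φ) (p.1 t, p.2 t)‖ := by
  rw [discountedTermFDeriv]
  calc _ ≤ ‖β ^ t‖ * ‖(fderiv ℝ (uncurry φ) (p.1 t, p.2 t)).comp (seqEvalCLM t)‖ :=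
        ContinuousLinearMap.opNorm_smul_le _ _
    _ ≤ |β| ^ t * (‖fderiv ℝ (uncurry φ) (p.1 t, p.2 t)‖
          * ‖seqEvalCLM (X := X) (Y := Y) t‖) := by
        rw [Real.norm_eq_abs, abs_pow]
        gcongr
        exact ContinuousLinearMap.opNorm_comp_le _ _
    _ ≤ |β| ^ t * ‖fderiv ℝ (uncurry φ) (p.1 t, p.2 t)‖ := by
        gcongr
        exact mul_le_of_le_one_right (norm_nonneg _) (norm_seqEvalCLM_le t)

theorem exists_bound_uncurry_fderiv_near [ProperSpace X] [ProperSpace Y] (hV : IsOpen V)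
    (hφ : ContDiffOn ℝ 1 (uncurry φ) (univ ×ˢ V)) {p : C₀(ℕ, X) × ℓ∞(Y)}
    (hp : p.2 ∈ uniformlyInside V) :
    ∃ M, ∀ᶠ q in 𝓝 p, ∀ t,
      ‖φ (q.1 t) (q.2 t)‖ ≤ M ∧ ‖fderiv ℝ (uncurry φ) (q.1 t, q.2 t)‖ ≤ M := by
  obtain ⟨S, hS, hSV, hnear⟩ := exists_isCompact_seqEvalCLM_mem hp
  have hcont : ContinuousOn (fun z => (uncurry φ z, fderiv ℝ (uncurry φ) z)) S :=
    (hφ.continuousOn.mono hSV).prodMk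
      ((hφ.continuousOn_fderiv_of_isOpen (isOpen_univ.prod hV) le_rfl).mono hSV)
  obtain ⟨M, hM⟩ := hS.exists_bound_of_continuousOn hcont
  refine ⟨M, ?_⟩
  filter_upwards [hnear] with q hq t
  have hMq := hM _ (hq t)
  exact ⟨(norm_fst_le _).trans hMq, (norm_snd_le _).trans hMq⟩

variable [ProperSpace X] [ProperSpace Y]

theorem summable_discountedTerm (hV : IsOpen V) (hφ : ContDiffOn ℝ 1 (uncurry φ) (univ ×ˢ V))
    (hβ : |β| < 1) {p : C₀(ℕ, X) × ℓ∞(Y)} (hp : p.2 ∈ uniformlyInside V) :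
    Summable fun t => β ^ t * φ (p.1 t) (p.2 t) := by
  obtain ⟨M, hM⟩ := exists_bound_uncurry_fderiv_near hV hφ hp
  refine ((summable_geometric_of_abs_lt_one hβ).abs.mul_right M).of_norm_bounded fun t => ?_
  rw [norm_mul, norm_pow, Real.norm_eq_abs, ← abs_pow]
  exact mul_le_mul_of_nonneg_left (hM.self_of_nhds t).1 (abs_nonneg _)

theorem discountedTermFDeriv_locally_dominated (hV : IsOpen V)
    (hφ : ContDiffOn ℝ 1 (uncurry φ) (univ ×ˢ V)) (hβ : |β| < 1) :
    ∀ p ∈ univ ×ˢ uniformlyInside V, ∃ c : ℕ → ℝ, Summable c ∧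
      ∀ᶠ q in 𝓝 p, ∀ t, ‖discountedTermFDeriv β φ t q‖ ≤ c t := by
  rintro p ⟨-, hp⟩
  obtain ⟨M, hM⟩ := exists_bound_uncurry_fderiv_near hV hφ hp
  refine ⟨fun t => |β| ^ t * M, (summable_geometric_of_lt_one (abs_nonneg β) hβ).mul_right M, ?_⟩
  filter_upwards [hM] with q hq t
  exact (norm_discountedTermFDeriv_le t q).trans
    (mul_le_mul_of_nonneg_left (hq t).2 (pow_nonneg (abs_nonneg β) t))

theorem contDiffOn_discountedSum (hV : IsOpen V) (hφ : ContDiffOn ℝ 1 (uncurry φ) (univ ×ˢ V))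
    (hβ : |β| < 1) : ContDiffOn ℝ 1 (discountedSum β φ) (univ ×ˢ uniformlyInside V) :=
  contDiffOn_tsum_of_locally_dominated (isOpen_univ.prod (isOpen_uniformlyInside V))
    (fun t _ hp => hasFDerivAt_discountedTerm hV hφ t (apply_mem_of_mem_uniformlyInside hp.2 t))
    (continuousOn_discountedTermFDeriv hV hφ)
    (discountedTermFDeriv_locally_dominated hV hφ hβ)
    fun _ hp => summable_discountedTerm hV hφ hβ hp.2

theorem fderiv_discountedSum_apply (hV : IsOpen V)
    (hφ : ContDiffOn ℝ 1 (uncurry φ) (univ ×ˢ V)) (hβ : |β| < 1) {p : C₀(ℕ, X) × ℓ∞(Y)}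
    (hp : p.2 ∈ uniformlyInside V) (v : C₀(ℕ, X) × ℓ∞(Y)) :
    fderiv ℝ (discountedSum β φ) p v
      = ∑' t, β ^ t * fderiv ℝ (uncurry φ) (p.1 t, p.2 t) (v.1 t, v.2 t) :=
  fderiv_tsum_apply_of_locally_dominated (isOpen_univ.prod (isOpen_uniformlyInside V))
    (fun t _ hq => hasFDerivAt_discountedTerm hV hφ t (apply_mem_of_mem_uniformlyInside hq.2 t))
    (discountedTermFDeriv_locally_dominated hV hφ hβ) ⟨mem_univ _, hp⟩
    (summable_discountedTerm hV hφ hβ hp) v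

end DiscountedSum

theorem stmt_6_general {n d : ℕ}
    (U : Set (Fin d → ℝ)) (hUcl : IsClosed U)
    (φ : (Fin n → ℝ) → (Fin d → ℝ) → ℝ)
    (U1 : Set (Fin d → ℝ)) (hU1open : IsOpen U1) (hUU1 : U ⊆ U1)
    (hφ : ContDiffOn ℝ 1 (fun q : (Fin n → ℝ) × (Fin d → ℝ) => φ q.1 q.2) (Set.univ ×ˢ U1))
    (β : ℝ) (hβ : 0 < β ∧ β < 1) :
    ∃ O : Set (lp (fun _ : ℕ => Fin d → ℝ) ⊤), IsOpen O ∧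
      {u : lp (fun _ : ℕ => Fin d → ℝ) ⊤ | ∀ t : ℕ, u t ∈ U} ⊆ O ∧
      ∃ Jx : C₀(ℕ, Fin n → ℝ) × lp (fun _ : ℕ => Fin d → ℝ) ⊤ → ℝ,
        -- Jx is the functional J on c₀(ℕ, ℝⁿ) × ℓ∞(ℕ, U)
        (∀ (x : C₀(ℕ, Fin n → ℝ)) (u : lp (fun _ : ℕ => Fin d → ℝ) ⊤),
          (∀ t : ℕ, u t ∈ U) → Jx (x, u) = ∑' t : ℕ, β ^ t * φ (x t) (u t)) ∧
        -- J is of class C¹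
        ContDiffOn ℝ 1 Jx (Set.univ ×ˢ O) ∧
        -- formula for the differential
        (∀ (x : C₀(ℕ, Fin n → ℝ)) (u : lp (fun _ : ℕ => Fin d → ℝ) ⊤),
          (∀ t : ℕ, u t ∈ U) →
          ∀ (δx : C₀(ℕ, Fin n → ℝ)) (δu : lp (fun _ : ℕ => Fin d → ℝ) ⊤),
            fderiv ℝ Jx (x, u) (δx, δu)
              = ∑' t : ℕ, β ^ t * (fderiv ℝ (fun y => φ y (u t)) (x t) (δx t)
                + fderiv ℝ (fun v => φ (x t) v) (u t) (δu t))) := by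
  have hβ' : |β| < 1 := by rw [abs_of_pos hβ.1]; exact hβ.2
  have hO := setOf_forall_mem_subset_uniformlyInside hUcl hU1open hUU1
  refine ⟨uniformlyInside U1, isOpen_uniformlyInside U1, hO, discountedSum β φ,
    fun x u _ => rfl, contDiffOn_discountedSum hU1open hφ hβ', ?_⟩
  intro x u hu δx δu
  rw [fderiv_discountedSum_apply hU1open hφ hβ' (p := (x, u)) (hO hu)]
  refine tsum_congr fun t => congrArg _ (fderiv_uncurry_apply ?_ _ _)
  exact (hφ.differentiableOn one_ne_zero).differentiableAt
    ((isOpen_univ.prod hU1open).mem_nhds ⟨mem_univ _, hUU1 (hu t)⟩)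

/-- Proposition 3.11, smoothness of the criterion.  Let `U ⊆ ℝᵈ` be
nonempty closed, `φ : ℝⁿ × U → ℝ` of class `C¹` on `ℝⁿ × U` (total function, `C¹` on
`univ ×ˢ U₁` for an open `U₁ ⊇ U`), and `β ∈ (0,1)`.  Then
`J(x, u) := Σ_t βᵗ φ(x_t, u_t)` is a continuously Fréchet differentiable functional on
`c₀(ℕ, ℝⁿ) × ℓ∞(ℕ, U)` — rendered as: there exist an open `O ⊇ ℓ∞(ℕ, U)` and a `C¹`
functional `Jx` on `c₀(ℕ, ℝⁿ) × O` agreeing with the sum on `c₀(ℕ, ℝⁿ) × ℓ∞(ℕ, U)` —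
with `DJ(x, u)(δx, δu) = Σ_t βᵗ (D₁φ(x_t, u_t) δx_t + D₂φ(x_t, u_t) δu_t)` there. -/
theorem stmt_6 {n d : ℕ}
    (U : Set (Fin d → ℝ)) (hUne : U.Nonempty) (hUcl : IsClosed U)
    (φ : (Fin n → ℝ) → (Fin d → ℝ) → ℝ)
    (U1 : Set (Fin d → ℝ)) (hU1open : IsOpen U1) (hUU1 : U ⊆ U1)
    (hφ : ContDiffOn ℝ 1 (fun q : (Fin n → ℝ) × (Fin d → ℝ) => φ q.1 q.2) (Set.univ ×ˢ U1))
    (β : ℝ) (hβ : 0 < β ∧ β < 1) :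
    ∃ O : Set (lp (fun _ : ℕ => Fin d → ℝ) ⊤), IsOpen O ∧
      {u : lp (fun _ : ℕ => Fin d → ℝ) ⊤ | ∀ t : ℕ, u t ∈ U} ⊆ O ∧
      ∃ Jx : C₀(ℕ, Fin n → ℝ) × lp (fun _ : ℕ => Fin d → ℝ) ⊤ → ℝ,
        -- Jx is the functional J on c₀(ℕ, ℝⁿ) × ℓ∞(ℕ, U)
        (∀ (x : C₀(ℕ, Fin n → ℝ)) (u : lp (fun _ : ℕ => Fin d → ℝ) ⊤),
          (∀ t : ℕ, u t ∈ U) → Jx (x, u) = ∑' t : ℕ, β ^ t * φ (x t) (u t)) ∧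
        -- J is of class C¹
        ContDiffOn ℝ 1 Jx (Set.univ ×ˢ O) ∧
        -- formula for the differential
        (∀ (x : C₀(ℕ, Fin n → ℝ)) (u : lp (fun _ : ℕ => Fin d → ℝ) ⊤),
          (∀ t : ℕ, u t ∈ U) →
          ∀ (δx : C₀(ℕ, Fin n → ℝ)) (δu : lp (fun _ : ℕ => Fin d → ℝ) ⊤),
            fderiv ℝ Jx (x, u) (δx, δu)
              = ∑' t : ℕ, β ^ t * (fderiv ℝ (fun y => φ y (u t)) (x t) (δx t)
                + fderiv ℝ (fun v => φ (x t) v) (u t) (δu t))) :=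
  stmt_6_general U hUcl φ U1 hU1open hUU1 hφ β hβ
end
end

section
/- Let U be a nonempty convex subset of ℝᵈ, β ∈ (0,1), η, y∞ ∈ ℝⁿ, ψ : ℝⁿ × U → ℝ and g : ℝⁿ × U → ℝⁿ. Let (ŷ, û) with ŷ a sequence in ℝⁿ converging to y∞ and û ∈ ℓ∞(ℕ, U), and let p ∈ ℓ¹(ℕ*, ℝⁿ*), satisfy: (i) ŷ_{t+1} = g(ŷ_t, û_t) for all t ∈ ℕ and ŷ₀ = η; (ii) ψ and g are of class C¹ on ℝⁿ × U; (iii) ψ maps bounded subsets of ℝⁿ × U into bounded subsets of ℝ; (iv) p_t = p_{t+1} ∘ D₁g(ŷ_t, û_t) + βᵗ D₁ψ(ŷ_t, û_t) for all t ≥ 1; (v) ⟨p_{t+1} ∘ D₂g(ŷ_t, û_t) + βᵗ D₂ψ(ŷ_t, û_t), u − û_t⟩ ≤ 0 for all u ∈ U and all t ∈ ℕ; (vi) for each t ∈ ℕ the function (y, u) ↦ ⟨p_{t+1}, g(y, u)⟩ + βᵗ ψ(y, u) is concave on ℝⁿ × U. Then (ŷ, û) is a solution of problem (P): it maximizes Σ_{t=0}^{∞}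 βᵗ ψ(y_t, u_t) over all sequences y in ℝⁿ and bounded sequences u with values in U subject to y₀ = η, lim_{t→∞} y_t = y∞, and y_{t+1} = g(y_t, u_t) for all t ∈ ℕ. -/
open Filter Topology Bornology Set

/-!
Concavity of the Hamiltonian `H_t(y, u) = p_{t+1}(g(y, u)) + βᵗ ψ(y, u)` gives the tangent-plane
inequality at `(ŷ_t, û_t)`; there the adjoint equation turns the state part of the derivative into
`p_t` and the weak maximum principle makes the control part nonpositive, so every admissible
`(y, u)` satisfies
`βᵗ ψ(y_t, u_t) - βᵗ ψ(ŷ_t, û_t) ≤ p_t(y_t - ŷ_t) - p_{t+1}(y_{t+1} - ŷ_{t+1})`.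
The partial sums telescope to `-p_T(y_T - ŷ_T)`, which tends to `0` since `p_T → 0` and
`y_T - ŷ_T → 0`; both series converge because `ψ` is bounded along bounded trajectories and
`β < 1`.
-/

section Calculus

variable {E F G : Type*} [NormedAddCommGroup E] [NormedSpace ℝ E]
  [NormedAddCommGroup F] [NormedSpace ℝ F] [NormedAddCommGroup G] [NormedSpace ℝ G]

theorem ConcaveOn.le_add_fderiv {s : Set E} {f : E → ℝ} {f' : E →L[ℝ] ℝ} {x y : E}
    (hf : ConcaveOn ℝ s f) (hx : x ∈ s) (hy : y ∈ s) (hf' : HasFDerivAt f f' x) :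
    f y ≤ f x + f' (y - x) := by
  set L : ℝ →ᵃ[ℝ] E := AffineMap.lineMap x y
  have hL0 : L 0 = x := AffineMap.lineMap_apply_zero x y
  have hL1 : L 1 = y := AffineMap.lineMap_apply_one x y
  have hline : HasDerivAt (f ∘ L) (f' (y - x)) 0 :=
    (hL0 ▸ hf').comp_hasDerivAt (0 : ℝ) AffineMap.hasDerivAt_lineMap
  have h := (hf.comp_affineMap L).slope_le_of_hasDerivAt (x := 0) (y := 1)
    (by rwa [mem_preimage, hL0]) (by rwa [mem_preimage, hL1]) zero_lt_one hline
  rw [slope_def_field, Function.comp_apply, Function.comp_apply, hL0, hL1] at h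
  linarith

theorem DifferentiableAt.hasFDerivAt_partial_fst {f : E → F → G} {x : E} {u : F}
    (hf : DifferentiableAt ℝ (fun q : E × F => f q.1 q.2) (x, u)) :
    HasFDerivAt (f · u) ((fderiv ℝ (fun q : E × F => f q.1 q.2) (x, u)).comp
      (ContinuousLinearMap.inl ℝ E F)) x := by
  exact hf.hasFDerivAt.comp x (hasFDerivAt_prodMk_left (𝕜 := ℝ) x u)

theorem DifferentiableAt.hasFDerivAt_partial_snd {f : E → F → G} {x : E} {u : F}
    (hf : DifferentiableAt ℝ (fun q : E × F => f q.1 q.2) (x, u)) :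
    HasFDerivAt (f x ·) ((fderiv ℝ (fun q : E × F => f q.1 q.2) (x, u)).comp
      (ContinuousLinearMap.inr ℝ E F)) u := by
  exact hf.hasFDerivAt.comp u (hasFDerivAt_prodMk_right (𝕜 := ℝ) x u)

theorem hamiltonian_le_of_concaveOn {s : Set (E × F)} {g : E → F → G} {ψ : E → F → ℝ}
    {q : G →L[ℝ] ℝ} {c : ℝ} {x₀ x : E} {u₀ u : F}
    (hconc : ConcaveOn ℝ s (fun z : E × F => q (g z.1 z.2) + c * ψ z.1 z.2))
    (hz₀ : (x₀, u₀) ∈ s) (hz : (x, u) ∈ s)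
    (hg : DifferentiableAt ℝ (fun z : E × F => g z.1 z.2) (x₀, u₀))
    (hψ : DifferentiableAt ℝ (fun z : E × F => ψ z.1 z.2) (x₀, u₀))
    (hcontrol : q (fderiv ℝ (g x₀ ·) u₀ (u - u₀)) + c * fderiv ℝ (ψ x₀ ·) u₀ (u - u₀) ≤ 0) :
    q (g x u) + c * ψ x u ≤ q (g x₀ u₀) + c * ψ x₀ u₀
      + (q.comp (fderiv ℝ (g · u₀) x₀) + c • fderiv ℝ (ψ · u₀) x₀) (x - x₀) := by
  set Dg := fderiv ℝ (fun z : E × F => g z.1 z.2) (x₀, u₀)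
  set Dψ := fderiv ℝ (fun z : E × F => ψ z.1 z.2) (x₀, u₀)
  have hH : HasFDerivAt (fun z : E × F => q (g z.1 z.2) + c * ψ z.1 z.2)
      (q.comp Dg + c • Dψ) (x₀, u₀) :=
    (q.hasFDerivAt.comp _ hg.hasFDerivAt).add (hψ.hasFDerivAt.const_mul c)
  have htan := hconc.le_add_fderiv hz₀ hz hH
  rw [← ContinuousLinearMap.comp_inl_add_comp_inr] at htan
  rw [hg.hasFDerivAt_partial_fst.fderiv, hψ.hasFDerivAt_partial_fst.fderiv]
  rw [hg.hasFDerivAt_partial_snd.fderiv, hψ.hasFDerivAt_partial_snd.fderiv] at hcontrol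
  simp only [Prod.mk_sub_mk, ContinuousLinearMap.add_comp, ContinuousLinearMap.comp_assoc,
    ContinuousLinearMap.smul_comp, add_apply, ContinuousLinearMap.comp_apply, smul_apply,
    smul_eq_mul] at htan hcontrol ⊢
  linarith

end Calculus

theorem summable_pow_mul_of_isBounded_range {β : ℝ} (h0 : 0 ≤ β) (h1 : β < 1) {f : ℕ → ℝ}
    (hf : IsBounded (range f)) : Summable fun t => β ^ t * f t := by
  obtain ⟨C, hC⟩ := isBounded_iff_forall_norm_le.1 hf
  refine .of_norm_bounded ((summable_geometric_of_lt_one h0 h1).mul_right C) fun t => ?_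
  rw [norm_mul, norm_pow, Real.norm_of_nonneg h0]
  exact mul_le_mul_of_nonneg_left (hC _ ⟨t, rfl⟩) (pow_nonneg h0 t)

theorem tsum_le_sub_of_le_sub_succ {a q : ℕ → ℝ} {l : ℝ} (ha : Summable a)
    (hle : ∀ t, a t ≤ q t - q (t + 1)) (hq : Tendsto q atTop (𝓝 l)) :
    ∑' t, a t ≤ q 0 - l :=
  le_of_tendsto_of_tendsto' ha.hasSum.tendsto_sum_nat (tendsto_const_nhds.sub hq) fun T =>
    (Finset.sum_le_sum fun t _ => hle t).trans_eq (Finset.sum_range_sub' q T)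

theorem isBounded_range_uncurry_comp {ι E F : Type*} [PseudoMetricSpace E] [PseudoMetricSpace F]
    {s : Set (E × F)} {ψ : E → F → ℝ}
    (hψ : ∀ S ⊆ s, IsBounded S → IsBounded ((fun q : E × F => ψ q.1 q.2) '' S))
    {y : ι → E} {u : ι → F} (hy : IsBounded (range y)) (hu : IsBounded (range u))
    (hs : ∀ t, (y t, u t) ∈ s) : IsBounded (range fun t => ψ (y t) (u t)) := by
  have hpair : IsBounded (range fun t => (y t, u t)) :=
    (hy.prod hu).subset (range_subset_iff.2 fun t => ⟨mem_range_self t, mem_range_self t⟩)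
  have h := hψ _ (range_subset_iff.2 hs) hpair
  rw [← range_comp] at h
  exact h

theorem stmt_19_general {n d : ℕ}
    (U : Set (Fin d → ℝ))
    (β : ℝ) (hβ : 0 < β ∧ β < 1) (η yinf : Fin n → ℝ)
    (ψ : (Fin n → ℝ) → (Fin d → ℝ) → ℝ)
    (g : (Fin n → ℝ) → (Fin d → ℝ) → (Fin n → ℝ))
    (yhat : ℕ → (Fin n → ℝ)) (uhat : ℕ → (Fin d → ℝ))
    (hyhatlim : Tendsto yhat atTop (𝓝 yinf))
    (huhatU : ∀ t, uhat t ∈ U) (huhatbd : IsBounded (Set.range uhat))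
    (p : ℕ → ((Fin n → ℝ) →L[ℝ] ℝ)) (hp : Summable fun t => ‖p t‖)
    -- (i)
    (hinit : yhat 0 = η) (hdyn : ∀ t : ℕ, yhat (t + 1) = g (yhat t) (uhat t))
    -- (ii): ψ, g of class C¹ on ℝⁿ × U
    (U1 : Set (Fin d → ℝ)) (hU1open : IsOpen U1) (hUU1 : U ⊆ U1)
    (hψ : ContDiffOn ℝ 1 (fun q : (Fin n → ℝ) × (Fin d → ℝ) => ψ q.1 q.2) (Set.univ ×ˢ U1))
    (hg : ContDiffOn ℝ 1 (fun q : (Fin n → ℝ) × (Fin d → ℝ) => g q.1 q.2) (Set.univ ×ˢ U1))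
    -- (iii): ψ maps bounded subsets of ℝⁿ × U into bounded subsets of ℝ
    (hψbdd : ∀ s : Set ((Fin n → ℝ) × (Fin d → ℝ)), s ⊆ Set.univ ×ˢ U → IsBounded s →
      IsBounded ((fun q : (Fin n → ℝ) × (Fin d → ℝ) => ψ q.1 q.2) '' s))
    -- (iv): adjoint equation
    (hAE : ∀ t : ℕ, 1 ≤ t →
      p t = (p (t + 1)).comp (fderiv ℝ (fun y => g y (uhat t)) (yhat t))
        + β ^ t • fderiv ℝ (fun y => ψ y (uhat t)) (yhat t))
    -- (v): weak maximum principle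
    (hWM : ∀ t : ℕ, ∀ u ∈ U,
      (p (t + 1)) (fderiv ℝ (fun v => g (yhat t) v) (uhat t) (u - uhat t))
        + β ^ t * (fderiv ℝ (fun v => ψ (yhat t) v) (uhat t) (u - uhat t)) ≤ 0)
    -- (vi): concavity of the Hamiltonian
    (hconc : ∀ t : ℕ, ConcaveOn ℝ (Set.univ ×ˢ U)
      (fun q : (Fin n → ℝ) × (Fin d → ℝ) => (p (t + 1)) (g q.1 q.2) + β ^ t * ψ q.1 q.2)) :
    -- conclusion: (ŷ, û) solves (P)
    ∀ (y : ℕ → (Fin n → ℝ)) (u : ℕ → (Fin d → ℝ)),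
      Tendsto y atTop (𝓝 yinf) → (∀ t, u t ∈ U) → IsBounded (Set.range u) →
      y 0 = η → (∀ t : ℕ, y (t + 1) = g (y t) (u t)) →
      (∑' t : ℕ, β ^ t * ψ (y t) (u t)) ≤ ∑' t : ℕ, β ^ t * ψ (yhat t) (uhat t) := by
  intro y u hylim huU hubd hy0 hydyn
  have hsummable : ∀ Y V, Tendsto Y atTop (𝓝 yinf) → (∀ t, V t ∈ U) → IsBounded (range V) →
      Summable fun t => β ^ t * ψ (Y t) (V t) := fun Y V hY hVU hV =>
    summable_pow_mul_of_isBounded_range hβ.1.le hβ.2 <| isBounded_range_uncurry_comp hψbdd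
      (Metric.isBounded_range_of_tendsto Y hY) hV fun t => ⟨mem_univ _, hVU t⟩
  have hsum := hsummable y u hylim huU hubd
  have hsumhat := hsummable yhat uhat hyhatlim huhatU huhatbd
  have hmem : ∀ t, univ ×ˢ U1 ∈ 𝓝 (yhat t, uhat t) := fun t =>
    (isOpen_univ.prod hU1open).mem_nhds ⟨mem_univ _, hUU1 (huhatU t)⟩
  have hstep : ∀ t, β ^ t * ψ (y t) (u t) - β ^ t * ψ (yhat t) (uhat t) ≤
      p t (y t - yhat t) - p (t + 1) (y (t + 1) - yhat (t + 1)) := by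
    intro t
    have h := hamiltonian_le_of_concaveOn (hconc t) ⟨mem_univ _, huhatU t⟩
      (show (y t, u t) ∈ univ ×ˢ U from ⟨mem_univ _, huU t⟩)
      ((hg.differentiableOn one_ne_zero).differentiableAt (hmem t))
      ((hψ.differentiableOn one_ne_zero).differentiableAt (hmem t)) (hWM t (u t) (huU t))
    have hadj : ((p (t + 1)).comp (fderiv ℝ (fun y => g y (uhat t)) (yhat t))
        + β ^ t • fderiv ℝ (fun y => ψ y (uhat t)) (yhat t)) (y t - yhat t)
        = p t (y t - yhat t) := by
      rcases t.eq_zero_or_pos with rfl | ht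
      · simp only [hy0, hinit, sub_self, map_zero]
      · rw [← hAE t ht]
    rw [← hydyn, ← hdyn, hadj] at h
    rw [map_sub (p (t + 1))]
    linarith
  have htransversality : Tendsto (fun t => p t (y t - yhat t)) atTop (𝓝 0) :=
    ((continuous_fst.clm_apply continuous_snd).tendsto (0, 0)).comp
      (hp.of_norm.tendsto_atTop_zero.prodMk_nhds (sub_self yinf ▸ hylim.sub hyhatlim))
  have h := tsum_le_sub_of_le_sub_succ (hsum.sub hsumhat) hstep htransversality
  rw [hsum.tsum_sub hsumhat, hy0, hinit, sub_self, map_zero, sub_zero] at h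
  linarith

/-- Theorem 11.1, sufficient conditions for (P).  Let `U ⊆ ℝᵈ` be
nonempty convex, `β ∈ (0,1)`, `η, y∞ ∈ ℝⁿ`, and `(ŷ, û)` with `ŷ_t → y∞`,
`û ∈ ℓ∞(ℕ, U)`, `p ∈ ℓ¹(ℕ*, ℝⁿ*)` satisfy (i)–(vi).  Then `(ŷ, û)` solves (P).  `ψ` and
`g` are total functions; "of class `C¹` on `ℝⁿ × U`" is rendered by `C¹` on
`univ ×ˢ U₁` for an open `U₁ ⊇ U`. -/
theorem stmt_19 {n d : ℕ}
    (U : Set (Fin d → ℝ)) (hUne : U.Nonempty) (hUconv : Convex ℝ U)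
    (β : ℝ) (hβ : 0 < β ∧ β < 1) (η yinf : Fin n → ℝ)
    (ψ : (Fin n → ℝ) → (Fin d → ℝ) → ℝ)
    (g : (Fin n → ℝ) → (Fin d → ℝ) → (Fin n → ℝ))
    (yhat : ℕ → (Fin n → ℝ)) (uhat : ℕ → (Fin d → ℝ))
    (hyhatlim : Tendsto yhat atTop (𝓝 yinf))
    (huhatU : ∀ t, uhat t ∈ U) (huhatbd : IsBounded (Set.range uhat))
    (p : ℕ → ((Fin n → ℝ) →L[ℝ] ℝ)) (hp : Summable fun t => ‖p t‖)
    -- (i)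
    (hinit : yhat 0 = η) (hdyn : ∀ t : ℕ, yhat (t + 1) = g (yhat t) (uhat t))
    -- (ii): ψ, g of class C¹ on ℝⁿ × U
    (U1 : Set (Fin d → ℝ)) (hU1open : IsOpen U1) (hUU1 : U ⊆ U1)
    (hψ : ContDiffOn ℝ 1 (fun q : (Fin n → ℝ) × (Fin d → ℝ) => ψ q.1 q.2) (Set.univ ×ˢ U1))
    (hg : ContDiffOn ℝ 1 (fun q : (Fin n → ℝ) × (Fin d → ℝ) => g q.1 q.2) (Set.univ ×ˢ U1))
    -- (iii): ψ maps bounded subsets of ℝⁿ × U into bounded subsets of ℝ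
    (hψbdd : ∀ s : Set ((Fin n → ℝ) × (Fin d → ℝ)), s ⊆ Set.univ ×ˢ U → IsBounded s →
      IsBounded ((fun q : (Fin n → ℝ) × (Fin d → ℝ) => ψ q.1 q.2) '' s))
    -- (iv): adjoint equation
    (hAE : ∀ t : ℕ, 1 ≤ t →
      p t = (p (t + 1)).comp (fderiv ℝ (fun y => g y (uhat t)) (yhat t))
        + β ^ t • fderiv ℝ (fun y => ψ y (uhat t)) (yhat t))
    -- (v): weak maximum principle
    (hWM : ∀ t : ℕ, ∀ u ∈ U,
      (p (t + 1)) (fderiv ℝ (fun v => g (yhat t) v) (uhat t) (u - uhat t))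
        + β ^ t * (fderiv ℝ (fun v => ψ (yhat t) v) (uhat t) (u - uhat t)) ≤ 0)
    -- (vi): concavity of the Hamiltonian
    (hconc : ∀ t : ℕ, ConcaveOn ℝ (Set.univ ×ˢ U)
      (fun q : (Fin n → ℝ) × (Fin d → ℝ) => (p (t + 1)) (g q.1 q.2) + β ^ t * ψ q.1 q.2)) :
    -- conclusion: (ŷ, û) solves (P)
    ∀ (y : ℕ → (Fin n → ℝ)) (u : ℕ → (Fin d → ℝ)),
      Tendsto y atTop (𝓝 yinf) → (∀ t, u t ∈ U) → IsBounded (Set.range u) →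
      y 0 = η → (∀ t : ℕ, y (t + 1) = g (y t) (u t)) →
      (∑' t : ℕ, β ^ t * ψ (y t) (u t)) ≤ ∑' t : ℕ, β ^ t * ψ (yhat t) (uhat t) :=
  stmt_19_general U β hβ η yinf ψ g yhat uhat hyhatlim huhatU huhatbd p hp hinit hdyn U1 hU1open
    hUU1 hψ hg hψbdd hAE hWM hconc
end
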